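/- arXiv:1004.5212 — 4 statements merged into one kernel-verified Lean document; each statement's English description precedes it below -/
import Mathlib

section
/- Let $(\psi_k) \subseteq X_1^*$ be a $p$-Bessel sequence for $X_1$ with bound $B_1$, $(\phi_k) \subseteq X_2$ a $q$-Bessel sequence for $X_2^*$ with bound $B_2$, and $m \in \ell^\infty$. Then the multiplier $\mathbf{M}_{m,(\phi_k),(\psi_k)}(f) = \sum_k m_k \psi_k(f) \phi_k$ is a well-defined bounded operator from $X_1$ to $X_2$, the series converges unconditionally for each $f \in X_1$, and $\|\mathbf{M}\|_{Op} \le B_1 B_2 \|m\|_\infty$. -/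
/-!
Testing a finite partial sum of `∑ m k ψ k (f) φ k` against `h ∈ X₂*` and applying Hölder's
inequality gives `|h (∑_F …)| ≤ ‖m‖_∞ (∑_F |ψ k f|^p)^{1/p} B₂ ‖h‖`, so by Hahn–Banach every
finite block of the series has norm at most `‖m‖_∞ B₂` times the `ℓ^p`-norm of the matching block
of `(ψ k f)`. Applied to tails this is the Cauchy criterion, giving unconditional convergence in the
complete space `X₂`; applied to all finite sets it gives the bound `B₁ B₂ ‖m‖_∞ ‖f‖`.
-/

open Filter Topology

section BesselMultiplier

variable {E : Type*}

/-- A `q`-Bessel sequence `(φ k) ⊆ X` for `X*` is `IsBesselSeq q B fun k h => h (φ k)`. -/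
def IsBesselSeq [Norm E] (p B : ℝ) (g : ℕ → E → ℝ) : Prop :=
  ∀ x, ∃ s, HasSum (fun k => |g k x| ^ p) s ∧ s ^ (1 / p) ≤ B * ‖x‖

lemma rpow_sum_abs_rpow_le_of_hasSum {a : ℕ → ℝ} {p s : ℝ} (hp : 0 ≤ p)
    (ha : HasSum (fun k => |a k| ^ p) s) (F : Finset ℕ) :
    (∑ k ∈ F, |a k| ^ p) ^ (1 / p) ≤ s ^ (1 / p) := by
  have hnonneg : ∀ k, 0 ≤ |a k| ^ p := fun k => by positivity
  exact Real.rpow_le_rpow (Finset.sum_nonneg fun k _ => hnonneg k)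
    (sum_le_hasSum F (fun k _ => hnonneg k) ha) (by positivity)

lemma IsBesselSeq.rpow_sum_le [Norm E] {p B : ℝ} {g : ℕ → E → ℝ} (hg : IsBesselSeq p B g)
    (hp : 0 ≤ p) (x : E) (F : Finset ℕ) : (∑ k ∈ F, |g k x| ^ p) ^ (1 / p) ≤ B * ‖x‖ := by
  obtain ⟨s, hs, hsB⟩ := hg x
  exact (rpow_sum_abs_rpow_le_of_hasSum hp hs F).trans hsB

section Synthesis

variable [NormedAddCommGroup E] [NormedSpace ℝ E] {p q B C : ℝ} {φ : ℕ → E} {m : ℕ → ℝ}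

lemma norm_sum_mul_smul_le (hpq : p.HolderConjugate q) (hB : 0 ≤ B)
    (hφ : IsBesselSeq q B fun k (h : StrongDual ℝ E) => h (φ k)) (hm : ∀ k, |m k| ≤ C)
    (a : ℕ → ℝ) (F : Finset ℕ) :
    ‖∑ k ∈ F, (m k * a k) • φ k‖ ≤ C * B * (∑ k ∈ F, |a k| ^ p) ^ (1 / p) := by
  have hC : 0 ≤ C := (abs_nonneg _).trans (hm 0)
  refine NormedSpace.norm_le_dual_bound ℝ _ (by positivity) fun h => ?_
  have hφF := hφ.rpow_sum_le hpq.symm.nonneg h F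
  simp only [map_sum, map_smul, smul_eq_mul, Real.norm_eq_abs]
  calc |∑ k ∈ F, m k * a k * h (φ k)|
      ≤ ∑ k ∈ F, |m k| * (|a k| * |h (φ k)|) := by
        simpa only [abs_mul, mul_assoc] using
          Finset.abs_sum_le_sum_abs (fun k => m k * a k * h (φ k)) F
    _ ≤ ∑ k ∈ F, C * (|a k| * |h (φ k)|) := by gcongr with k; exact hm k
    _ = C * ∑ k ∈ F, |a k| * |h (φ k)| := by rw [Finset.mul_sum]
    _ ≤ C * ((∑ k ∈ F, |a k| ^ p) ^ (1 / p) * (∑ k ∈ F, |h (φ k)| ^ q) ^ (1 / q)) := by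
        gcongr
        simpa only [abs_abs] using Real.inner_le_Lp_mul_Lq F (|a ·|) (|h <| φ ·|) hpq
    _ ≤ C * ((∑ k ∈ F, |a k| ^ p) ^ (1 / p) * (B * ‖h‖)) := by gcongr
    _ = C * B * (∑ k ∈ F, |a k| ^ p) ^ (1 / p) * ‖h‖ := by ring

variable [CompleteSpace E]

lemma summable_mul_smul (hpq : p.HolderConjugate q) (hB : 0 ≤ B)
    (hφ : IsBesselSeq q B fun k (h : StrongDual ℝ E) => h (φ k)) (hm : ∀ k, |m k| ≤ C)
    {a : ℕ → ℝ} (ha : Summable fun k => |a k| ^ p) :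
    Summable fun k => (m k * a k) • φ k := by
  have hcont : Tendsto (fun x : ℝ => C * B * x ^ (1 / p)) (𝓝 0) (𝓝 0) := by
    have := ((Real.continuous_rpow_const (one_div_nonneg.2 hpq.nonneg)).const_mul
      (C * B)).tendsto 0
    rwa [Real.zero_rpow (by simp [hpq.ne_zero]), mul_zero] at this
  refine summable_iff_vanishing_norm.2 fun ε hε => ?_
  obtain ⟨δ, hδ, hδε⟩ := Metric.eventually_nhds_iff.1 (hcont.eventually (gt_mem_nhds hε))
  obtain ⟨F, hF⟩ := summable_iff_vanishing_norm.1 ha δ hδ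
  refine ⟨F, fun t ht => (norm_sum_mul_smul_le hpq hB hφ hm a t).trans_lt (hδε ?_)⟩
  simpa [Real.dist_eq] using hF t ht

lemma norm_tsum_mul_smul_le (hpq : p.HolderConjugate q) (hB : 0 ≤ B)
    (hφ : IsBesselSeq q B fun k (h : StrongDual ℝ E) => h (φ k)) (hm : ∀ k, |m k| ≤ C)
    {a : ℕ → ℝ} {s : ℝ} (ha : HasSum (fun k => |a k| ^ p) s) :
    ‖∑' k, (m k * a k) • φ k‖ ≤ C * B * s ^ (1 / p) := by
  have hsum := (summable_mul_smul hpq hB hφ hm ha.summable).hasSum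
  refine le_of_tendsto hsum.norm (Eventually.of_forall fun F => ?_)
  have hC : 0 ≤ C := (abs_nonneg _).trans (hm 0)
  exact (norm_sum_mul_smul_le hpq hB hφ hm a F).trans
    (mul_le_mul_of_nonneg_left (rpow_sum_abs_rpow_le_of_hasSum hpq.nonneg ha F) (by positivity))

end Synthesis

end BesselMultiplier

theorem multiplier_bounded_general {X₁ X₂ : Type*}
    [NormedAddCommGroup X₁] [NormedSpace ℝ X₁]
    [NormedAddCommGroup X₂] [NormedSpace ℝ X₂] [CompleteSpace X₂]
    (p q B₁ B₂ : ℝ) (hp : 1 < p) (hpq : 1 / p + 1 / q = 1) (hB₁ : 0 < B₁) (hB₂ : 0 < B₂)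
    (ψ : ℕ → StrongDual ℝ X₁) (φ : ℕ → X₂) (m : ℕ → ℝ)
    (hbesselψ : ∀ f : X₁, ∃ s : ℝ,
      HasSum (fun k => |ψ k f| ^ p) s ∧ s ^ (1 / p) ≤ B₁ * ‖f‖)
    (hbesselφ : ∀ h : StrongDual ℝ X₂, ∃ s : ℝ,
      HasSum (fun k => |h (φ k)| ^ q) s ∧ s ^ (1 / q) ≤ B₂ * ‖h‖)
    (hm : BddAbove (Set.range fun k => |m k|)) :
    ∃ M : X₁ →L[ℝ] X₂,
      (∀ f : X₁, HasSum (fun k => (m k * ψ k f) • φ k) (M f)) ∧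
      ‖M‖ ≤ B₁ * B₂ * ⨆ k, |m k| := by
  set C := ⨆ k, |m k|
  have hmC : ∀ k, |m k| ≤ C := fun k => le_ciSup hm k
  have hC : 0 ≤ C := (abs_nonneg _).trans (hmC 0)
  have hpq' : p.HolderConjugate q :=
    Real.holderConjugate_iff.2 ⟨hp, by simpa only [one_div] using hpq⟩
  have hsum (f : X₁) : Summable fun k => (m k * ψ k f) • φ k :=
    have ⟨_, hs, _⟩ := hbesselψ f
    summable_mul_smul hpq' hB₂.le hbesselφ hmC hs.summable
  have hbound (f : X₁) : ‖∑' k, (m k * ψ k f) • φ k‖ ≤ B₁ * B₂ * C * ‖f‖ := by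
    obtain ⟨s, hs, hsB⟩ := hbesselψ f
    calc _ ≤ C * B₂ * s ^ (1 / p) := norm_tsum_mul_smul_le hpq' hB₂.le hbesselφ hmC hs
      _ ≤ C * B₂ * (B₁ * ‖f‖) := by gcongr
      _ = B₁ * B₂ * C * ‖f‖ := by ring
  let M : X₁ →ₗ[ℝ] X₂ :=
    { toFun f := ∑' k, (m k * ψ k f) • φ k
      map_add' f g := by
        simp only [map_add, mul_add, add_smul]
        exact (hsum f).tsum_add (hsum g)
      map_smul' c f := by
        simp only [map_smul, smul_eq_mul, RingHom.id_apply, ← (hsum f).tsum_const_smul c,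
          smul_smul, mul_left_comm c] }
  exact ⟨M.mkContinuous _ hbound, fun f => (hsum f).hasSum,
    M.mkContinuous_norm_le (by positivity) hbound⟩

/-- The `(p,q)`-Bessel multiplier `M f = ∑ m k • ψ k (f) • φ k` of a `p`-Bessel sequence
`(ψ k) ⊆ X₁*` (bound `B₁`), a `q`-Bessel sequence `(φ k) ⊆ X₂` for `X₂*` (bound `B₂`) and a
bounded symbol `m` is a well-defined bounded operator, the series converges unconditionally,
and `‖M‖ ≤ B₁ B₂ ‖m‖_∞`. -/
theorem multiplier_bounded {X₁ X₂ : Type*}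
    [NormedAddCommGroup X₁] [NormedSpace ℝ X₁] [CompleteSpace X₁]
    [TopologicalSpace.SeparableSpace X₁]
    [NormedAddCommGroup X₂] [NormedSpace ℝ X₂] [CompleteSpace X₂]
    [TopologicalSpace.SeparableSpace X₂]
    (hrefl₁ : Function.Surjective (NormedSpace.inclusionInDoubleDual ℝ X₁))
    (hrefl₂ : Function.Surjective (NormedSpace.inclusionInDoubleDual ℝ X₂))
    (p q B₁ B₂ : ℝ) (hp : 1 < p) (hpq : 1 / p + 1 / q = 1) (hB₁ : 0 < B₁) (hB₂ : 0 < B₂)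
    (ψ : ℕ → StrongDual ℝ X₁) (φ : ℕ → X₂) (m : ℕ → ℝ)
    (hbesselψ : ∀ f : X₁, ∃ s : ℝ,
      HasSum (fun k => |ψ k f| ^ p) s ∧ s ^ (1 / p) ≤ B₁ * ‖f‖)
    (hbesselφ : ∀ h : StrongDual ℝ X₂, ∃ s : ℝ,
      HasSum (fun k => |h (φ k)| ^ q) s ∧ s ^ (1 / q) ≤ B₂ * ‖h‖)
    (hm : BddAbove (Set.range fun k => |m k|)) :
    ∃ M : X₁ →L[ℝ] X₂,
      (∀ f : X₁, HasSum (fun k => (m k * ψ k f) • φ k) (M f)) ∧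
      ‖M‖ ≤ B₁ * B₂ * ⨆ k, |m k| :=
  multiplier_bounded_general p q B₁ B₂ hp hpq hB₁ hB₂ ψ φ m hbesselψ hbesselφ hm
end

section
/- Let $(\psi_k) \subseteq X_1^*$ be a $p$-Bessel sequence with $\psi_k \ne 0$ for all $k$, and let $(\phi_k) \subseteq X_2$ be a $p$-Riesz sequence. Then the map $m \mapsto \mathbf{M}_{m,(\phi_k),(\psi_k)}$ from $\ell^\infty$ into $\mathcal{B}(X_1, X_2)$ is injective. -/
/-!
Subtracting the two expansions gives `∑ₖ (mₖ - m'ₖ) ψₖ(f) φₖ = 0` for every `f`. The lower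
`p`-Riesz bound applied to the finite partial sums shows `A |cₖ| ≤ ‖∑_{j ∈ F} cⱼ φⱼ‖` whenever
`k ∈ F`, and these partial sums tend to `0`, so every coefficient vanishes. Since `ψₖ ≠ 0`,
some `f` has `ψₖ(f) ≠ 0`, whence `mₖ = m'ₖ`.
-/

open Filter Topology

theorem abs_apply_le_rpow_sum_rpow {ι : Type*} {p : ℝ} (hp : 0 < p) (d : ι →₀ ℝ) (k : ι) :
    |d k| ≤ (∑ j ∈ d.support, |d j| ^ p) ^ (1 / p) := by
  by_cases hk : k ∈ d.support
  · have hle : |d k| ^ p ≤ ∑ j ∈ d.support, |d j| ^ p :=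
      Finset.single_le_sum (f := fun j => |d j| ^ p)
        (fun j _ => Real.rpow_nonneg (abs_nonneg _) p) hk
    calc |d k| = (|d k| ^ p) ^ (1 / p) := by
          rw [← Real.rpow_mul (abs_nonneg _), mul_one_div, div_self hp.ne', Real.rpow_one]
      _ ≤ _ := Real.rpow_le_rpow (Real.rpow_nonneg (abs_nonneg _) _) hle (by positivity)
  · rw [Finsupp.notMem_support_iff.mp hk, abs_zero]
    positivity

section LowerRiesz

variable {ι E : Type*} [NormedAddCommGroup E] [NormedSpace ℝ E] {φ : ι → E} {p A : ℝ}

def LowerRieszBound (p A : ℝ) (φ : ι → E) : Prop :=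
  ∀ d : ι →₀ ℝ, A * (∑ k ∈ d.support, |d k| ^ p) ^ (1 / p) ≤ ‖∑ k ∈ d.support, d k • φ k‖

theorem LowerRieszBound.mul_abs_le_norm_sum_smul (hlower : LowerRieszBound p A φ) (hp : 0 < p)
    (hA : 0 ≤ A) (c : ι → ℝ) {F : Finset ι} {k : ι} (hk : k ∈ F) :
    A * |c k| ≤ ‖∑ j ∈ F, c j • φ j‖ := by
  classical
  set d : ι →₀ ℝ := Finsupp.indicator F fun j _ => c j
  have hdF : ∀ j ∈ F, d j = c j := fun j hj => by simp [d, Finsupp.indicator_apply, hj]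
  have hsum : ∑ j ∈ d.support, d j • φ j = ∑ j ∈ F, c j • φ j := by
    rw [Finset.sum_subset (Finsupp.support_indicator_subset _ _) fun j _ hj => by
      rw [Finsupp.notMem_support_iff.mp hj, zero_smul]]
    exact Finset.sum_congr rfl fun j hj => by rw [hdF j hj]
  calc A * |c k| = A * |d k| := by rw [hdF k hk]
    _ ≤ A * (∑ j ∈ d.support, |d j| ^ p) ^ (1 / p) :=
      mul_le_mul_of_nonneg_left (abs_apply_le_rpow_sum_rpow hp d k) hA
    _ ≤ _ := hsum ▸ hlower d

theorem LowerRieszBound.eq_zero_of_hasSum_smul_zero (hlower : LowerRieszBound p A φ) (hp : 0 < p)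
    (hA : 0 < A) {c : ι → ℝ} (hc : HasSum (fun j => c j • φ j) 0) : c = 0 := by
  funext k
  have hbound : ∀ᶠ F in atTop, A * |c k| ≤ ‖∑ j ∈ F, c j • φ j‖ :=
    (eventually_ge_atTop {k}).mono fun F hF =>
      hlower.mul_abs_le_norm_sum_smul hp hA.le c (hF (Finset.mem_singleton_self k))
  have hle : A * |c k| ≤ 0 := by
    simpa using ge_of_tendsto (show Tendsto _ atTop _ from hc).norm hbound
  exact abs_eq_zero.mp (le_antisymm (nonpos_of_mul_nonpos_right hle hA) (abs_nonneg _))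

end LowerRiesz

theorem multiplier_symbol_injective_general {X₁ X₂ : Type*}
    [NormedAddCommGroup X₁] [NormedSpace ℝ X₁]
    [NormedAddCommGroup X₂] [NormedSpace ℝ X₂]
    (p A B : ℝ) (hp : 1 < p)
    (hA : 0 < A)
    (ψ : ℕ → StrongDual ℝ X₁) (φ : ℕ → X₂)
    (hψne : ∀ k, ψ k ≠ 0)
    (hriesz : ∀ d : ℕ →₀ ℝ,
      A * (∑ k ∈ d.support, |d k| ^ p) ^ (1 / p) ≤ ‖∑ k ∈ d.support, d k • φ k‖ ∧
      ‖∑ k ∈ d.support, d k • φ k‖ ≤ B * (∑ k ∈ d.support, |d k| ^ p) ^ (1 / p))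
    (m m' : ℕ → ℝ)
    (M M' : X₁ →L[ℝ] X₂)
    (hM : ∀ f : X₁, HasSum (fun k => (m k * ψ k f) • φ k) (M f))
    (hM' : ∀ f : X₁, HasSum (fun k => (m' k * ψ k f) • φ k) (M' f)) :
    M = M' → m = m' := by
  intro hMM'
  funext k
  obtain ⟨f, hf⟩ : ∃ f, ψ k f ≠ 0 := DFunLike.ne_iff.mp (hψne k)
  have hdiff : HasSum (fun j => ((m j - m' j) * ψ j f) • φ j) 0 := by
    simpa [hMM', sub_mul, sub_smul] using (hM f).sub (hM' f)
  have hlower : LowerRieszBound p A φ := fun d => (hriesz d).1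
  have hcoeff := congrFun (hlower.eq_zero_of_hasSum_smul_zero (by linarith) hA hdiff) k
  exact sub_eq_zero.mp ((mul_eq_zero.mp hcoeff).resolve_right hf)

/-- If `(ψ k) ⊆ X₁*` is a `p`-Bessel sequence with no zero elements and `(φ k) ⊆ X₂` is a
`p`-Riesz sequence, then the map `m ↦ M_{m,(φ k),(ψ k)}` from `ℓ^∞` into `B(X₁, X₂)` is
injective. -/
theorem multiplier_symbol_injective {X₁ X₂ : Type*}
    [NormedAddCommGroup X₁] [NormedSpace ℝ X₁] [CompleteSpace X₁]
    [TopologicalSpace.SeparableSpace X₁]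
    [NormedAddCommGroup X₂] [NormedSpace ℝ X₂] [CompleteSpace X₂]
    [TopologicalSpace.SeparableSpace X₂]
    (hrefl₁ : Function.Surjective (NormedSpace.inclusionInDoubleDual ℝ X₁))
    (hrefl₂ : Function.Surjective (NormedSpace.inclusionInDoubleDual ℝ X₂))
    (p q B₁ A B : ℝ) (hp : 1 < p) (hpq : 1 / p + 1 / q = 1)
    (hB₁ : 0 < B₁) (hA : 0 < A) (hB : 0 < B)
    (ψ : ℕ → StrongDual ℝ X₁) (φ : ℕ → X₂)
    (hbesselψ : ∀ f : X₁, ∃ s : ℝ,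
      HasSum (fun k => |ψ k f| ^ p) s ∧ s ^ (1 / p) ≤ B₁ * ‖f‖)
    (hψne : ∀ k, ψ k ≠ 0)
    (hriesz : ∀ d : ℕ →₀ ℝ,
      A * (∑ k ∈ d.support, |d k| ^ p) ^ (1 / p) ≤ ‖∑ k ∈ d.support, d k • φ k‖ ∧
      ‖∑ k ∈ d.support, d k • φ k‖ ≤ B * (∑ k ∈ d.support, |d k| ^ p) ^ (1 / p))
    (m m' : ℕ → ℝ)
    (hm : BddAbove (Set.range fun k => |m k|))
    (hm' : BddAbove (Set.range fun k => |m' k|))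
    (M M' : X₁ →L[ℝ] X₂)
    (hM : ∀ f : X₁, HasSum (fun k => (m k * ψ k f) • φ k) (M f))
    (hM' : ∀ f : X₁, HasSum (fun k => (m' k * ψ k f) • φ k) (M' f)) :
    M = M' → m = m' :=
  multiplier_symbol_injective_general p A B hp hA ψ φ hψne hriesz m m' M M' hM hM'
end

section
/- Let $(\psi_k) \subseteq X_1^*$ be a $p$-Bessel sequence for $X_1$ with bound $B_1$, $(\phi_k) \subseteq X_2$ a $q$-Bessel sequence for $X_2^*$ with bound $B_2$, $r > 0$ and $m \in \ell^r$. Then the multiplier $\mathbf{M}_{m,(\phi_k),(\psi_k)}$ is an $(r,p,q)$-nuclear operator with $N_{(r,p,q)}(\mathbf{M}) \le B_1 B_2 \|m\|_r$. -/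
/-!
Factor `M = T ∘ D_m ∘ U` through `ℓᵖ`. The analysis operator `U f = (ψ k f)ₖ` has norm at
most `B₁` by the `p`-Bessel bound, and `D_m` is bounded because `m ∈ ℓʳ` forces
`|m k| ≤ ‖m‖_r`. For the synthesis operator `T ξ = ∑ ξ k φ k`, testing a finite section against
`h ∈ X₂*` and applying Hölder with the `q`-Bessel bound gives
`‖∑_{k ∈ s} ξ k φ k‖ ≤ B₂ (∑_{k ∈ s} |ξ k|ᵖ)^{1/p}`; this makes the series Cauchy and bounds
`‖T‖` by `B₂`.
-/

open scoped ENNReal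

section

open Filter Topology

variable {ι 𝕜 X : Type*}

/-- A `p`-Bessel sequence with bound `B`, given by its coefficient maps: `(ψ k) ⊆ X*` is `p`-Bessel
for `X` when `c k f = ψ k f`, and `(φ k) ⊆ X` is `q`-Bessel for `X*` when `c k h = h (φ k)`. -/
def IsBessel [NormedField 𝕜] [Norm X] (p : ℝ≥0∞) (B : ℝ) (c : ι → X → 𝕜) : Prop :=
  ∀ f : X, ∃ s : ℝ, HasSum (fun k => ‖c k f‖ ^ p.toReal) s ∧ s ^ (1 / p.toReal) ≤ B * ‖f‖

theorem norm_le_rpow_one_div_of_hasSum_rpow [NormedAddCommGroup X] {m : ι → X} {r t : ℝ}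
    (hr : 0 < r) (hm : HasSum (fun k => ‖m k‖ ^ r) t) (k : ι) : ‖m k‖ ≤ t ^ (1 / r) := by
  have hk : ‖m k‖ ^ r ≤ t := le_hasSum hm k fun j _ => by positivity
  calc ‖m k‖ = (‖m k‖ ^ r) ^ (1 / r) := by
        rw [← Real.rpow_mul (norm_nonneg _), mul_one_div_cancel hr.ne', Real.rpow_one]
    _ ≤ t ^ (1 / r) := by gcongr

theorem summable_of_norm_sum_le_mul_rpow [NormedAddCommGroup X] [CompleteSpace X] {v : ι → X}
    {a : ι → ℝ} (ha : Summable a) {C r : ℝ} (hr : 0 < r)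
    (hv : ∀ s : Finset ι, ‖∑ k ∈ s, v k‖ ≤ C * (∑ k ∈ s, a k) ^ r) : Summable v := by
  have h0 : Tendsto (fun x : ℝ => C * x ^ r) (𝓝 0) (𝓝 0) := by
    simpa [Real.zero_rpow hr.ne'] using
      ((Real.continuousAt_rpow_const 0 r (Or.inr hr.le)).const_mul C).tendsto
  refine summable_iff_vanishing_norm.mpr fun ε hε => ?_
  obtain ⟨s, hs⟩ := summable_iff_vanishing.mp ha _ (h0 (Iio_mem_nhds hε))
  exact ⟨s, fun u hu => (hv u).trans_lt (hs u hu)⟩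

namespace lp

variable [NontriviallyNormedField 𝕜] {p : ℝ≥0∞} [Fact (1 ≤ p)]

theorem rpow_sum_rpow_le_norm (hp : 0 < p.toReal) (ξ : lp (fun _ : ι => 𝕜) p) (s : Finset ι) :
    (∑ k ∈ s, ‖ξ k‖ ^ p.toReal) ^ (1 / p.toReal) ≤ ‖ξ‖ := by
  calc (∑ k ∈ s, ‖ξ k‖ ^ p.toReal) ^ (1 / p.toReal)
      ≤ (‖ξ‖ ^ p.toReal) ^ (1 / p.toReal) := by gcongr; exact lp.sum_rpow_le_norm_rpow hp ξ s
    _ = ‖ξ‖ := by rw [← Real.rpow_mul (norm_nonneg _), mul_one_div_cancel hp.ne', Real.rpow_one]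

theorem exists_diagonal_clm {m : ι → 𝕜} {C : ℝ} (hC : 0 ≤ C) (hm : ∀ k, ‖m k‖ ≤ C) :
    ∃ D : lp (fun _ : ι => 𝕜) p →L[𝕜] lp (fun _ : ι => 𝕜) p,
      (∀ ξ k, D ξ k = m k * ξ k) ∧ ‖D‖ ≤ C := by
  have hmem (ξ : lp (fun _ : ι => 𝕜) p) : Memℓp (fun k => m k * ξ k) p :=
    ((lp.memℓp ξ).norm.const_mul C).mono fun k => by
      rw [norm_mul]; exact mul_le_mul_of_nonneg_right (hm k) (norm_nonneg _)
  let D : lp (fun _ : ι => 𝕜) p →ₗ[𝕜] lp (fun _ : ι => 𝕜) p :=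
    { toFun := fun ξ => ⟨fun k => m k * ξ k, hmem ξ⟩
      map_add' := fun ξ η => by ext k; exact mul_add _ _ _
      map_smul' := fun c ξ => by ext k; exact mul_left_comm _ _ _ }
  have hp : p ≠ 0 := (zero_lt_one.trans_le Fact.out).ne'
  have hD (ξ) : ‖D ξ‖ ≤ C * ‖ξ‖ := by
    let z : lp (fun _ : ι => ℝ) p := ⟨fun k => ‖ξ k‖, (lp.memℓp ξ).norm⟩
    calc ‖D ξ‖ ≤ ‖C • z‖ := lp.norm_mono hp fun k => by
          simpa [D, z, abs_of_nonneg hC] using mul_le_mul_of_nonneg_right (hm k) (norm_nonneg _)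
      _ ≤ ‖C‖ * ‖z‖ := lp.norm_const_smul_le hp C z
      _ ≤ C * ‖ξ‖ := by
          rw [Real.norm_of_nonneg hC]
          exact mul_le_mul_of_nonneg_left (lp.norm_mono hp fun k => by simp [z]) hC
  exact ⟨D.mkContinuous C hD, fun _ _ => rfl, D.mkContinuous_norm_le hC hD⟩

end lp

namespace IsBessel

variable {p q : ℝ≥0∞} {B : ℝ}

theorem exists_analysis_clm [Fact (1 ≤ p)] [NontriviallyNormedField 𝕜] [NormedAddCommGroup X]
    [NormedSpace 𝕜 X] {ψ : ι → StrongDual 𝕜 X} (hp : p ≠ ∞) (hB : 0 ≤ B)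
    (hψ : IsBessel p B fun k f => ψ k f) :
    ∃ E : X →L[𝕜] lp (fun _ : ι => 𝕜) p, (∀ f k, E f k = ψ k f) ∧ ‖E‖ ≤ B := by
  have hp₀ : 0 < p.toReal := ENNReal.toReal_pos (zero_lt_one.trans_le Fact.out).ne' hp
  have hmem (f : X) : Memℓp (fun k => ψ k f) p := by
    obtain ⟨s, hs, -⟩ := hψ f
    exact memℓp_gen hs.summable
  let E : X →ₗ[𝕜] lp (fun _ : ι => 𝕜) p :=
    { toFun := fun f => ⟨fun k => ψ k f, hmem f⟩
      map_add' := fun f g => by ext k; exact map_add (ψ k) f g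
      map_smul' := fun c f => by ext k; exact map_smul (ψ k) c f }
  have hE (f : X) : ‖E f‖ ≤ B * ‖f‖ := by
    obtain ⟨s, hs, hsB⟩ := hψ f
    rw [lp.norm_eq_tsum_rpow hp₀]
    exact hs.tsum_eq ▸ hsB
  exact ⟨E.mkContinuous B hE, fun _ _ => rfl, E.mkContinuous_norm_le hB hE⟩

variable [RCLike 𝕜] [NormedAddCommGroup X] [NormedSpace 𝕜 X] {φ : ι → X}

theorem norm_sum_smul_le (hpq : p.toReal.HolderConjugate q.toReal) (hB : 0 ≤ B)
    (hφ : IsBessel q B fun k (h : StrongDual 𝕜 X) => h (φ k)) (ξ : ι → 𝕜) (s : Finset ι) :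
    ‖∑ k ∈ s, ξ k • φ k‖ ≤ B * (∑ k ∈ s, ‖ξ k‖ ^ p.toReal) ^ (1 / p.toReal) := by
  refine NormedSpace.norm_le_dual_bound 𝕜 _ (by positivity) fun h => ?_
  obtain ⟨t, ht, htB⟩ := hφ h
  have hpartial : (∑ k ∈ s, ‖h (φ k)‖ ^ q.toReal) ^ (1 / q.toReal) ≤ B * ‖h‖ :=
    le_trans (by gcongr; exact sum_le_hasSum s (fun k _ => by positivity) ht) htB
  have hHolder := Real.inner_le_Lp_mul_Lq s (fun k => ‖ξ k‖) (fun k => ‖h (φ k)‖) hpq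
  simp only [abs_norm] at hHolder
  calc ‖h (∑ k ∈ s, ξ k • φ k)‖ ≤ ∑ k ∈ s, ‖ξ k‖ * ‖h (φ k)‖ := by
        simpa only [map_sum, map_smul, smul_eq_mul, norm_mul]
          using norm_sum_le s fun k => ξ k * h (φ k)
    _ ≤ (∑ k ∈ s, ‖ξ k‖ ^ p.toReal) ^ (1 / p.toReal) * (B * ‖h‖) :=
        hHolder.trans (by gcongr)
    _ = B * (∑ k ∈ s, ‖ξ k‖ ^ p.toReal) ^ (1 / p.toReal) * ‖h‖ := by ring

theorem exists_synthesis_clm [Fact (1 ≤ p)] [CompleteSpace X]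
    (hpq : p.toReal.HolderConjugate q.toReal) (hB : 0 ≤ B)
    (hφ : IsBessel q B fun k (h : StrongDual 𝕜 X) => h (φ k)) :
    ∃ F : lp (fun _ : ι => 𝕜) p →L[𝕜] X,
      (∀ ξ, HasSum (fun k => ξ k • φ k) (F ξ)) ∧ ‖F‖ ≤ B := by
  have hp₀ : 0 < p.toReal := hpq.pos
  have hsum (ξ : lp (fun _ : ι => 𝕜) p) : HasSum (fun k => ξ k • φ k) (∑' k, ξ k • φ k) :=
    (summable_of_norm_sum_le_mul_rpow ((lp.memℓp ξ).summable hp₀) (by positivity)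
      (hφ.norm_sum_smul_le hpq hB ξ)).hasSum
  let F : lp (fun _ : ι => 𝕜) p →ₗ[𝕜] X :=
    { toFun := fun ξ => ∑' k, ξ k • φ k
      map_add' := fun ξ η => by
        simpa only [lp.coeFn_add, Pi.add_apply, add_smul] using ((hsum ξ).add (hsum η)).tsum_eq
      map_smul' := fun c ξ => by
        simpa only [lp.coeFn_smul, Pi.smul_apply, smul_eq_mul, mul_smul, RingHom.id_apply]
          using ((hsum ξ).const_smul c).tsum_eq }
  have hF (ξ : lp (fun _ : ι => 𝕜) p) : ‖F ξ‖ ≤ B * ‖ξ‖ :=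
    le_of_tendsto' (hsum ξ).norm fun s =>
      (hφ.norm_sum_smul_le hpq hB ξ s).trans (by gcongr; exact lp.rpow_sum_rpow_le_norm hp₀ ξ s)
  exact ⟨F.mkContinuous B hF, hsum, F.mkContinuous_norm_le hB hF⟩

end IsBessel

end

theorem multiplier_nuclear_general {X₁ X₂ : Type*}
    [NormedAddCommGroup X₁] [NormedSpace ℝ X₁]
    [NormedAddCommGroup X₂] [NormedSpace ℝ X₂] [CompleteSpace X₂]
    (p q : ℝ≥0∞) [Fact (1 ≤ p)] (hp : 1 < p) (hpt : p ≠ ∞) (hpq : 1 / p + 1 / q = 1)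
    (B₁ B₂ r : ℝ) (hB₁ : 0 < B₁) (hB₂ : 0 < B₂) (hr : 0 < r)
    (ψ : ℕ → StrongDual ℝ X₁) (φ : ℕ → X₂) (m : ℕ → ℝ)
    (hbesselψ : ∀ f : X₁, ∃ s : ℝ,
      HasSum (fun k => |ψ k f| ^ p.toReal) s ∧ s ^ (1 / p.toReal) ≤ B₁ * ‖f‖)
    (hbesselφ : ∀ h : StrongDual ℝ X₂, ∃ s : ℝ,
      HasSum (fun k => |h (φ k)| ^ q.toReal) s ∧ s ^ (1 / q.toReal) ≤ B₂ * ‖h‖)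
    (t : ℝ) (hmr : HasSum (fun k => |m k| ^ r) t)
    (M : X₁ →L[ℝ] X₂)
    (hM : ∀ f : X₁, HasSum (fun k => (m k * ψ k f) • φ k) (M f)) :
    ∃ (E : X₁ →L[ℝ] lp (fun _ : ℕ => ℝ) p)
      (D : lp (fun _ : ℕ => ℝ) p →L[ℝ] lp (fun _ : ℕ => ℝ) p)
      (F : lp (fun _ : ℕ => ℝ) p →L[ℝ] X₂),
      (∀ ξ : lp (fun _ : ℕ => ℝ) p, ∀ k : ℕ, (D ξ : ℕ → ℝ) k = m k * (ξ : ℕ → ℝ) k) ∧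
      M = F.comp (D.comp E) ∧
      ‖E‖ * t ^ (1 / r) * ‖F‖ ≤ B₁ * B₂ * t ^ (1 / r) := by
  have hp' : 1 < p.toReal := (ENNReal.toReal_lt_toReal ENNReal.one_ne_top hpt).mpr hp
  have hpq' : p.toReal.HolderConjugate q.toReal :=
    (ENNReal.HolderConjugate.toReal_iff hp').mpr
      (ENNReal.holderConjugate_iff.mpr (by simpa only [one_div] using hpq))
  have hψ : IsBessel p B₁ fun k f => ψ k f := by
    simpa only [IsBessel, Real.norm_eq_abs] using hbesselψ
  have hφ : IsBessel q B₂ fun k (h : StrongDual ℝ X₂) => h (φ k) := by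
    simpa only [IsBessel, Real.norm_eq_abs] using hbesselφ
  have hm (k : ℕ) : ‖m k‖ ≤ t ^ (1 / r) :=
    norm_le_rpow_one_div_of_hasSum_rpow hr (by simpa only [Real.norm_eq_abs] using hmr) k
  have ht : 0 ≤ t ^ (1 / r) := Real.rpow_nonneg (hmr.nonneg fun k => by positivity) _
  obtain ⟨E, hE, hEB⟩ := hψ.exists_analysis_clm hpt hB₁.le
  obtain ⟨D, hD, -⟩ := lp.exists_diagonal_clm (p := p) ht hm
  obtain ⟨F, hF, hFB⟩ := hφ.exists_synthesis_clm hpq' hB₂.le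
  refine ⟨E, D, F, hD, ?_, ?_⟩
  · ext f
    refine (hM f).unique ?_
    simpa only [ContinuousLinearMap.comp_apply, hD, hE] using hF (D (E f))
  · calc ‖E‖ * t ^ (1 / r) * ‖F‖ = ‖E‖ * ‖F‖ * t ^ (1 / r) := by ring
      _ ≤ B₁ * B₂ * t ^ (1 / r) := by gcongr

/-- If `(ψ k)` is a `p`-Bessel sequence for `X₁` with bound `B₁`, `(φ k)` a `q`-Bessel
sequence for `X₂*` with bound `B₂`, `r > 0` and `m ∈ ℓ^r`, then the multiplier
`M_{m,(φ k),(ψ k)}` is an `(r,p,q)`-nuclear operator with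
`N_{(r,p,q)}(M) ≤ B₁ B₂ ‖m‖_r`: it admits a factorization `M = F ∘ D_m ∘ E` through `ℓᵖ`
with diagonal symbol `m ∈ ℓ^r` and `‖E‖ ‖m‖_r ‖F‖ ≤ B₁ B₂ ‖m‖_r`. -/
theorem multiplier_nuclear {X₁ X₂ : Type*}
    [NormedAddCommGroup X₁] [NormedSpace ℝ X₁] [CompleteSpace X₁]
    [TopologicalSpace.SeparableSpace X₁]
    [NormedAddCommGroup X₂] [NormedSpace ℝ X₂] [CompleteSpace X₂]
    [TopologicalSpace.SeparableSpace X₂]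
    (hrefl₁ : Function.Surjective (NormedSpace.inclusionInDoubleDual ℝ X₁))
    (hrefl₂ : Function.Surjective (NormedSpace.inclusionInDoubleDual ℝ X₂))
    (p q : ℝ≥0∞) [Fact (1 ≤ p)] (hp : 1 < p) (hpt : p ≠ ∞) (hpq : 1 / p + 1 / q = 1)
    (B₁ B₂ r : ℝ) (hB₁ : 0 < B₁) (hB₂ : 0 < B₂) (hr : 0 < r)
    (ψ : ℕ → StrongDual ℝ X₁) (φ : ℕ → X₂) (m : ℕ → ℝ)
    (hbesselψ : ∀ f : X₁, ∃ s : ℝ,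
      HasSum (fun k => |ψ k f| ^ p.toReal) s ∧ s ^ (1 / p.toReal) ≤ B₁ * ‖f‖)
    (hbesselφ : ∀ h : StrongDual ℝ X₂, ∃ s : ℝ,
      HasSum (fun k => |h (φ k)| ^ q.toReal) s ∧ s ^ (1 / q.toReal) ≤ B₂ * ‖h‖)
    (t : ℝ) (hmr : HasSum (fun k => |m k| ^ r) t)
    (M : X₁ →L[ℝ] X₂)
    (hM : ∀ f : X₁, HasSum (fun k => (m k * ψ k f) • φ k) (M f)) :
    ∃ (E : X₁ →L[ℝ] lp (fun _ : ℕ => ℝ) p)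
      (D : lp (fun _ : ℕ => ℝ) p →L[ℝ] lp (fun _ : ℕ => ℝ) p)
      (F : lp (fun _ : ℕ => ℝ) p →L[ℝ] X₂),
      (∀ ξ : lp (fun _ : ℕ => ℝ) p, ∀ k : ℕ, (D ξ : ℕ → ℝ) k = m k * (ξ : ℕ → ℝ) k) ∧
      M = F.comp (D.comp E) ∧
      ‖E‖ * t ^ (1 / r) * ‖F‖ ≤ B₁ * B₂ * t ^ (1 / r) :=
  multiplier_nuclear_general p q hp hpt hpq B₁ B₂ r hB₁ hB₂ hr ψ φ m hbesselψ hbesselφ t hmr M hM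
end

section
/- Let $(\phi_k) \subseteq X_2$ be a $q$-Bessel sequence for $X_2^*$ with bound $B_2$, let $m \in \ell^{p_1}$ with $1/p_1 + 1/q_1 = 1$, and let $(\psi_k^{(l)}), (\psi_k) \subseteq X_1^*$ be $p$-Bessel sequences such that $(\psi_k^{(l)})$ converges to $(\psi_k)$ in the $\ell^{q_1}$-sense, i.e., $\left(\sum_k \|\psi_k^{(l)} - \psi_k\|^{q_1}\right)^{1/q_1} \to 0$ as $l \to \infty$. Then $\|\mathbf{M}_{m,(\phi_k),(\psi_k^{(l)})} - \mathbf{M}_{m,(\phi_k),(\psi_k)}\|_{Op} \to 0$; indeed the operator norm of the difference is bounded by $B_2 \|m\|_{p_1} \left(\sum_k \|\psi_k^{(l)} - \psi_k\|^{q_1}\right)^{1/q_1}$. -/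
/-!
Writing `Δˡ = ψˡ - ψ`, the difference `M_{m,φ,ψˡ} - M_{m,φ,ψ}` is the synthesis map of the
sequence of functionals `m • Δˡ`, which lies in `ℓ¹` by Hölder's inequality with
`‖m • Δˡ‖₁ ≤ ‖m‖_{p₁} ‖Δˡ‖_{q₁}`. A `q`-Bessel sequence is bounded by its Bessel bound, and a
synthesis map `f ↦ ∑ μₖ(f) φₖ` with `‖φₖ‖ ≤ C` has norm at most `C ‖μ‖₁`.
-/

open Filter
open scoped ENNReal

theorem Real.abs_le_rpow_one_div_of_hasSum {ι : Type*} {a : ι → ℝ} {q s : ℝ} (hq : 0 < q)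
    (ha : HasSum (fun k => |a k| ^ q) s) (i : ι) : |a i| ≤ s ^ (1 / q) := by
  have hterm : |a i| ^ q ≤ s := le_hasSum ha i fun j _ => by positivity
  calc |a i| = (|a i| ^ q) ^ (1 / q) := by
        rw [← Real.rpow_mul (abs_nonneg _), mul_one_div_cancel hq.ne', Real.rpow_one]
    _ ≤ s ^ (1 / q) := by gcongr

theorem norm_le_of_bessel {X : Type*} [NormedAddCommGroup X] [NormedSpace ℝ X] {φ : ℕ → X}
    {q B : ℝ} (hq : 0 < q) (hB : 0 ≤ B)
    (hφ : ∀ h : StrongDual ℝ X, ∃ s : ℝ,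
      HasSum (fun k => |h (φ k)| ^ q) s ∧ s ^ (1 / q) ≤ B * ‖h‖)
    (k : ℕ) : ‖φ k‖ ≤ B := by
  refine NormedSpace.norm_le_dual_bound ℝ _ hB fun h => ?_
  obtain ⟨s, hs, hsB⟩ := hφ h
  exact (Real.abs_le_rpow_one_div_of_hasSum hq hs k).trans hsB

namespace lp

variable {ι 𝕜 E : Type*} [RCLike 𝕜] [NormedAddCommGroup E] [NormedSpace 𝕜 E]
  {p q : ℝ≥0∞} [Fact (1 ≤ p)] [Fact (1 ≤ q)] [p.HolderConjugate q]

noncomputable def smulL :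
    lp (fun _ : ι => 𝕜) p →L[𝕜] lp (fun _ : ι => E) q →L[𝕜] lp (fun _ : ι => E) 1 :=
  holderL 1 (fun _ => ContinuousLinearMap.lsmul 𝕜 𝕜) (K := 1) fun _ =>
    ContinuousLinearMap.opNorm_lsmul_le

@[simp]
theorem smulL_apply (m : lp (fun _ : ι => 𝕜) p) (v : lp (fun _ : ι => E) q) (k : ι) :
    smulL m v k = m k • v k :=
  rfl

theorem norm_smulL_apply_le (m : lp (fun _ : ι => 𝕜) p) (v : lp (fun _ : ι => E) q) :
    ‖smulL m v‖ ≤ ‖m‖ * ‖v‖ := by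
  calc ‖smulL m v‖
      ≤ ‖(smulL : lp (fun _ : ι => 𝕜) p →L[𝕜] lp (fun _ : ι => E) q →L[𝕜] _)‖ * ‖m‖ * ‖v‖ :=
        ContinuousLinearMap.le_opNorm₂ _ _ _
    _ ≤ 1 * ‖m‖ * ‖v‖ := by gcongr; exact norm_holderL_le 1 _ _
    _ = ‖m‖ * ‖v‖ := by rw [one_mul]

end lp

theorem ContinuousLinearMap.opNorm_le_of_hasSum_smul {ι 𝕜 E F : Type*}
    [NontriviallyNormedField 𝕜] [NormedAddCommGroup E] [NormedSpace 𝕜 E]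
    [NormedAddCommGroup F] [NormedSpace 𝕜 F]
    (T : E →L[𝕜] F) (μ : lp (fun _ : ι => StrongDual 𝕜 E) 1) (φ : ι → F) {C : ℝ} (hC : 0 ≤ C)
    (hφ : ∀ k, ‖φ k‖ ≤ C) (hT : ∀ f, HasSum (fun k => μ k f • φ k) (T f)) :
    ‖T‖ ≤ C * ‖μ‖ := by
  refine T.opNorm_le_bound (by positivity) fun f => ?_
  have hμ : HasSum (fun k => ‖μ k‖) ‖μ‖ := by
    simpa using lp.hasSum_norm (p := 1) (by norm_num) μ
  have hbound : ∀ k, ‖μ k f • φ k‖ ≤ ‖μ k‖ * (C * ‖f‖) := fun k => by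
    calc ‖μ k f • φ k‖ = ‖μ k f‖ * ‖φ k‖ := norm_smul _ _
      _ ≤ ‖μ k‖ * ‖f‖ * C := by gcongr; exacts [(μ k).le_opNorm f, hφ k]
      _ = ‖μ k‖ * (C * ‖f‖) := by ring
  calc ‖T f‖ ≤ ‖μ‖ * (C * ‖f‖) := (hT f).norm_le_of_bounded (hμ.mul_right _) hbound
    _ = C * ‖μ‖ * ‖f‖ := by ring

theorem multiplier_continuous_analysis_general {X₁ X₂ : Type*}
    [NormedAddCommGroup X₁] [NormedSpace ℝ X₁]
    [NormedAddCommGroup X₂] [NormedSpace ℝ X₂]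
    (p q B₂ : ℝ) (hp : 1 < p) (hpq : 1 / p + 1 / q = 1) (hB₂ : 0 < B₂)
    (p₁ q₁ : ℝ≥0∞) [Fact (1 ≤ p₁)] [Fact (1 ≤ q₁)] (hpq₁ : 1 / p₁ + 1 / q₁ = 1)
    (ψ : ℕ → StrongDual ℝ X₁) (ψl : ℕ → ℕ → StrongDual ℝ X₁) (φ : ℕ → X₂)
    (hbesselφ : ∀ h : StrongDual ℝ X₂, ∃ s : ℝ,
      HasSum (fun k => |h (φ k)| ^ q) s ∧ s ^ (1 / q) ≤ B₂ * ‖h‖)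
    (m : lp (fun _ : ℕ => ℝ) p₁)
    (hdiff : ∀ l : ℕ, Memℓp (fun k => ψl l k - ψ k) q₁)
    (M : X₁ →L[ℝ] X₂)
    (hM : ∀ f : X₁, HasSum (fun k => ((m : ℕ → ℝ) k * ψ k f) • φ k) (M f))
    (Ml : ℕ → (X₁ →L[ℝ] X₂))
    (hMl : ∀ l : ℕ, ∀ f : X₁,
      HasSum (fun k => ((m : ℕ → ℝ) k * ψl l k f) • φ k) (Ml l f)) :
    (∀ l : ℕ, ‖Ml l - M‖ ≤
      B₂ * ‖m‖ * ‖(⟨fun k => ψl l k - ψ k, hdiff l⟩ : lp (fun _ : ℕ => StrongDual ℝ X₁) q₁)‖) ∧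
    (Tendsto (fun l =>
        ‖(⟨fun k => ψl l k - ψ k, hdiff l⟩ : lp (fun _ : ℕ => StrongDual ℝ X₁) q₁)‖)
        atTop (nhds 0) →
      Tendsto (fun l => ‖Ml l - M‖) atTop (nhds 0)) := by
  have hq : 0 < q :=
    (Real.holderConjugate_iff.mpr ⟨hp, by simpa only [one_div] using hpq⟩).symm.pos
  have : p₁.HolderConjugate q₁ :=
    ENNReal.holderConjugate_iff.mpr (by simpa only [one_div] using hpq₁)
  have hφ := norm_le_of_bessel hq hB₂.le hbesselφ
  have hbound : ∀ l, ‖Ml l - M‖ ≤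
      B₂ * ‖m‖ * ‖(⟨fun k => ψl l k - ψ k, hdiff l⟩ : lp (fun _ : ℕ => StrongDual ℝ X₁) q₁)‖ := by
    intro l
    set Δ : lp (fun _ : ℕ => StrongDual ℝ X₁) q₁ := ⟨fun k => ψl l k - ψ k, hdiff l⟩
    have hsum : ∀ f, HasSum (fun k => lp.smulL m Δ k f • φ k) ((Ml l - M) f) := fun f => by
      rw [sub_apply]
      convert (hMl l f).sub (hM f) using 2 with k
      simp [Δ, mul_sub, sub_smul]
    calc ‖Ml l - M‖ ≤ B₂ * ‖lp.smulL m Δ‖ :=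
          (Ml l - M).opNorm_le_of_hasSum_smul _ φ hB₂.le hφ hsum
      _ ≤ B₂ * (‖m‖ * ‖Δ‖) := by gcongr; exact lp.norm_smulL_apply_le m Δ
      _ = B₂ * ‖m‖ * ‖Δ‖ := (mul_assoc _ _ _).symm
  refine ⟨hbound, fun hΔ => ?_⟩
  simpa using squeeze_zero (fun l => norm_nonneg _) hbound (by simpa using hΔ.const_mul (B₂ * ‖m‖))

/-- Continuous dependence of the multiplier on the analysis sequence: if the `p`-Bessel
sequences `(ψ⁽ˡ⁾ k)` converge to `(ψ k)` in the `ℓ^{q₁}`-sense and `m ∈ ℓ^{p₁}`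
(`1/p₁ + 1/q₁ = 1`), then `‖M_{m,(φ),(ψ⁽ˡ⁾)} - M_{m,(φ),(ψ)}‖ → 0`; indeed the difference
is bounded by `B₂ ‖m‖_{p₁} (∑ ‖ψ⁽ˡ⁾ k - ψ k‖^{q₁})^{1/q₁}`. -/
theorem multiplier_continuous_analysis {X₁ X₂ : Type*}
    [NormedAddCommGroup X₁] [NormedSpace ℝ X₁] [CompleteSpace X₁]
    [TopologicalSpace.SeparableSpace X₁]
    [NormedAddCommGroup X₂] [NormedSpace ℝ X₂] [CompleteSpace X₂]
    [TopologicalSpace.SeparableSpace X₂]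
    (hrefl₁ : Function.Surjective (NormedSpace.inclusionInDoubleDual ℝ X₁))
    (hrefl₂ : Function.Surjective (NormedSpace.inclusionInDoubleDual ℝ X₂))
    (p q B₁ B₂ : ℝ) (hp : 1 < p) (hpq : 1 / p + 1 / q = 1) (hB₁ : 0 < B₁) (hB₂ : 0 < B₂)
    (p₁ q₁ : ℝ≥0∞) [Fact (1 ≤ p₁)] [Fact (1 ≤ q₁)] (hpq₁ : 1 / p₁ + 1 / q₁ = 1)
    (ψ : ℕ → StrongDual ℝ X₁) (ψl : ℕ → ℕ → StrongDual ℝ X₁) (φ : ℕ → X₂)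
    (hbesselψ : ∀ f : X₁, ∃ s : ℝ,
      HasSum (fun k => |ψ k f| ^ p) s ∧ s ^ (1 / p) ≤ B₁ * ‖f‖)
    (hbesselψl : ∀ l : ℕ, ∀ f : X₁, ∃ s : ℝ,
      HasSum (fun k => |ψl l k f| ^ p) s ∧ s ^ (1 / p) ≤ B₁ * ‖f‖)
    (hbesselφ : ∀ h : StrongDual ℝ X₂, ∃ s : ℝ,
      HasSum (fun k => |h (φ k)| ^ q) s ∧ s ^ (1 / q) ≤ B₂ * ‖h‖)
    (m : lp (fun _ : ℕ => ℝ) p₁)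
    (hdiff : ∀ l : ℕ, Memℓp (fun k => ψl l k - ψ k) q₁)
    (M : X₁ →L[ℝ] X₂)
    (hM : ∀ f : X₁, HasSum (fun k => ((m : ℕ → ℝ) k * ψ k f) • φ k) (M f))
    (Ml : ℕ → (X₁ →L[ℝ] X₂))
    (hMl : ∀ l : ℕ, ∀ f : X₁,
      HasSum (fun k => ((m : ℕ → ℝ) k * ψl l k f) • φ k) (Ml l f)) :
    (∀ l : ℕ, ‖Ml l - M‖ ≤
      B₂ * ‖m‖ * ‖(⟨fun k => ψl l k - ψ k, hdiff l⟩ : lp (fun _ : ℕ => StrongDual ℝ X₁) q₁)‖) ∧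
    (Tendsto (fun l =>
        ‖(⟨fun k => ψl l k - ψ k, hdiff l⟩ : lp (fun _ : ℕ => StrongDual ℝ X₁) q₁)‖)
        atTop (nhds 0) →
      Tendsto (fun l => ‖Ml l - M‖) atTop (nhds 0)) :=
  multiplier_continuous_analysis_general p q B₂ hp hpq hB₂ p₁ q₁ hpq₁ ψ ψl φ hbesselφ m hdiff M hM
    Ml hMl
end
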